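/- arXiv:2004.09743 — 2 statements merged into one kernel-verified Lean document; each statement's English description precedes it below -/
import Mathlib

section
/- For any matrix X ∈ ℂ^{m×n} of rank at most r, the nuclear norm satisfies ‖X‖_* = min { (1/2)(‖L‖_F² + ‖R‖_F²) : L ∈ ℂ^{m×r}, R ∈ ℂ^{n×r}, X = L·Rᴴ }. -/
open Matrix
open scoped ComplexOrder

/-- Nuclear norm: sum of singular values (square roots of eigenvalues of `Xᴴ * X`). -/
noncomputable def nuclearNorm {m n : ℕ} (X : Matrix (Fin m) (Fin n) ℂ) : ℝ :=
  ∑ i, Real.sqrt ((Matrix.isHermitian_conjTranspose_mul_self X).eigenvalues i)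

/-- Operator (spectral) norm of a matrix, via the induced Euclidean operator norm. -/
noncomputable def opNorm {m n : ℕ} (X : Matrix (Fin m) (Fin n) ℂ) : ℝ :=
  ‖(LinearMap.toContinuousLinearMap (Matrix.toEuclideanLin X))‖

/-- Frobenius norm of a matrix. -/
noncomputable def frobNorm {m n : ℕ} (X : Matrix (Fin m) (Fin n) ℂ) : ℝ :=
  Real.sqrt (∑ i, ∑ j, ‖X i j‖ ^ 2)

/-- Singular values in descending order: `svalsDesc X k` is the (k+1)-st largest singular value. -/
noncomputable def svalsDesc {m n : ℕ} (X : Matrix (Fin m) (Fin n) ℂ) : Fin n → ℝ :=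
  fun k => ((fun i => Real.sqrt ((Matrix.isHermitian_conjTranspose_mul_self X).eigenvalues i)) ∘
    Tuple.sort (fun i => Real.sqrt ((Matrix.isHermitian_conjTranspose_mul_self X).eigenvalues i))) k.rev

/-! Write the singular value decomposition as `X = V Σ Uᴴ` with `U` unitary and `V` a partial
isometry (`VᴴV` is the coordinate projection onto the support of `Σ`). For any factorization
`X = L Rᴴ`, `‖X‖_* = Re tr (Vᴴ X U) = Re ⟪Lᴴ V, Rᴴ U⟫_F ≤ (‖Lᴴ V‖_F² + ‖Rᴴ U‖_F²) / 2`, and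
multiplying by a partial isometry does not increase the Frobenius norm. Conversely
`L = V Σ^{1/2}`, `R = U Σ^{1/2}` attain the bound; only `rank X ≤ r` of their columns are
nonzero, so they fit into `r` columns. -/

lemma frobNorm_nonneg {m n : ℕ} (A : Matrix (Fin m) (Fin n) ℂ) : 0 ≤ frobNorm A :=
  Real.sqrt_nonneg _

lemma frobNorm_sq_eq_re_trace {m n : ℕ} (A : Matrix (Fin m) (Fin n) ℂ) :
    frobNorm A ^ 2 = (Aᴴ * A).trace.re := by
  rw [frobNorm, Real.sq_sqrt (by positivity), Finset.sum_comm]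
  simp [Matrix.trace, Matrix.mul_apply, Complex.mul_re, Complex.sq_norm, Complex.normSq_apply]

lemma re_trace_conjTranspose_mul_le {m n : ℕ} (A B : Matrix (Fin m) (Fin n) ℂ) :
    (Aᴴ * B).trace.re ≤ (frobNorm A ^ 2 + frobNorm B ^ 2) / 2 := by
  have hBA : (Bᴴ * A).trace.re = (Aᴴ * B).trace.re := by
    rw [← conjTranspose_conjTranspose A, ← conjTranspose_mul, trace_conjTranspose,
      conjTranspose_conjTranspose]
    exact Complex.conj_re _
  have h := sq_nonneg (frobNorm (A - B))
  rw [frobNorm_sq_eq_re_trace, conjTranspose_sub, Matrix.sub_mul, Matrix.mul_sub,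
    Matrix.mul_sub] at h
  simp only [trace_sub, Complex.sub_re, hBA] at h
  rw [frobNorm_sq_eq_re_trace, frobNorm_sq_eq_re_trace]
  linarith

lemma IsStarProjection.re_trace_conjTranspose_mul_mul_le {m n : ℕ}
    {P : Matrix (Fin m) (Fin m) ℂ} (hP : IsStarProjection P) (L : Matrix (Fin m) (Fin n) ℂ) :
    (Lᴴ * P * L).trace.re ≤ (Lᴴ * L).trace.re := by
  have hP' : (1 - P)ᴴ * (1 - P) = 1 - P := by
    rw [← star_eq_conjTranspose, hP.one_sub.isSelfAdjoint.star_eq, hP.one_sub.isIdempotentElem.eq]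
  have h : ((1 - P) * L)ᴴ * ((1 - P) * L) = Lᴴ * L - Lᴴ * P * L := by
    rw [conjTranspose_mul, Matrix.mul_assoc, ← Matrix.mul_assoc (1 - P)ᴴ, hP', Matrix.sub_mul,
      Matrix.one_mul, Matrix.mul_sub, Matrix.mul_assoc]
  have := sq_nonneg (frobNorm ((1 - P) * L))
  rw [frobNorm_sq_eq_re_trace, h, trace_sub, Complex.sub_re] at this
  linarith

lemma isStarProjection_mul_conjTranspose {ι κ α : Type*} [Fintype ι] [Fintype κ]
    [CommSemiring α] [StarRing α] {V : Matrix ι κ α}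
    (hV : V * Vᴴ * V = V) : IsStarProjection (V * Vᴴ) :=
  ⟨by rw [IsIdempotentElem, ← Matrix.mul_assoc, hV],
    by rw [IsSelfAdjoint, star_eq_conjTranspose, conjTranspose_mul, conjTranspose_conjTranspose]⟩

lemma frobNorm_conjTranspose_mul_le {m n r : ℕ} {V : Matrix (Fin m) (Fin n) ℂ}
    (hV : V * Vᴴ * V = V) (L : Matrix (Fin m) (Fin r) ℂ) :
    frobNorm (Lᴴ * V) ≤ frobNorm L := by
  refine (pow_le_pow_iff_left₀ (frobNorm_nonneg _) (frobNorm_nonneg _) two_ne_zero).mp ?_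
  rw [frobNorm_sq_eq_re_trace, frobNorm_sq_eq_re_trace, conjTranspose_mul,
    conjTranspose_conjTranspose, trace_mul_comm, ← Matrix.mul_assoc, Matrix.mul_assoc Lᴴ]
  exact (isStarProjection_mul_conjTranspose hV).re_trace_conjTranspose_mul_mul_le L

lemma frobNorm_sq_mul_mul {m n r : ℕ} (V : Matrix (Fin m) (Fin n) ℂ)
    (D : Matrix (Fin n) (Fin n) ℂ) (Q : Matrix (Fin n) (Fin r) ℂ) :
    frobNorm (V * D * Q) ^ 2 = (Dᴴ * (Vᴴ * V) * D * (Q * Qᴴ)).trace.re := by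
  rw [← Matrix.mul_assoc (Dᴴ * (Vᴴ * V) * D) Q Qᴴ, trace_mul_comm _ Qᴴ,
    frobNorm_sq_eq_re_trace, conjTranspose_mul, conjTranspose_mul]
  simp only [Matrix.mul_assoc]

lemma exists_mul_conjTranspose_eq_diagonal {ι α : Type*} [Fintype ι] [DecidableEq ι]
    [Semiring α] [StarRing α] (p : ι → Prop) [DecidablePred p] {r : ℕ}
    (h : Fintype.card {i // p i} ≤ r) :
    ∃ Q : Matrix ι (Fin r) α, Q * Qᴴ = diagonal (fun i => if p i then 1 else 0) := by
  obtain ⟨e⟩ := Function.Embedding.nonempty_of_card_le (h.trans (Fintype.card_fin r).ge)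
  let J : Matrix ι {i // p i} α := (1 : Matrix ι ι α).submatrix id Subtype.val
  let P : Matrix {i // p i} (Fin r) α := (1 : Matrix (Fin r) (Fin r) α).submatrix e id
  have hP : P * Pᴴ = 1 := by
    rw [conjTranspose_submatrix, conjTranspose_one,
      ← submatrix_mul _ _ _ _ _ Function.bijective_id, Matrix.one_mul, submatrix_one_embedding]
  refine ⟨J * P, ?_⟩
  rw [conjTranspose_mul, Matrix.mul_assoc, ← Matrix.mul_assoc P, hP, Matrix.one_mul]
  ext i j
  simp only [J, Matrix.mul_apply, conjTranspose_submatrix, conjTranspose_one, submatrix_apply, id,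
    one_apply, diagonal_apply]
  rw [← Finset.sum_subtype (Finset.univ.filter p) (by simp)
    (fun a => (if i = a then (1 : α) else 0) * if a = j then 1 else 0)]
  by_cases hij : i = j <;> simp [hij]

section SingularValueDecomposition

variable {m n : ℕ} (X : Matrix (Fin m) (Fin n) ℂ)

noncomputable def singularValues : Fin n → ℂ :=
  fun i => (√((isHermitian_conjTranspose_mul_self X).eigenvalues i) : ℂ)

noncomputable def rightSingularVectors : Matrix (Fin n) (Fin n) ℂ :=
  (isHermitian_conjTranspose_mul_self X).eigenvectorUnitary

noncomputable def singularSupport : Fin n → ℂ :=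
  fun i => if singularValues X i ≠ 0 then 1 else 0

/-- The inverse is `0` where the singular value vanishes, so those columns of `V` are zero. -/
noncomputable def leftSingularVectors : Matrix (Fin m) (Fin n) ℂ :=
  X * rightSingularVectors X * diagonal (singularValues X)⁻¹

lemma rightSingularVectors_mul_conjTranspose :
    rightSingularVectors X * (rightSingularVectors X)ᴴ = 1 :=
  Matrix.mem_unitaryGroup_iff.mp (SetLike.coe_mem _)

lemma conjTranspose_rightSingularVectors_mul :
    (rightSingularVectors X)ᴴ * rightSingularVectors X = 1 :=
  Matrix.mem_unitaryGroup_iff'.mp (SetLike.coe_mem _)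

lemma star_singularValues (i : Fin n) : star (singularValues X i) = singularValues X i :=
  Complex.conj_ofReal _

lemma singularValues_sq (i : Fin n) :
    singularValues X i ^ 2 = (isHermitian_conjTranspose_mul_self X).eigenvalues i := by
  rw [singularValues, ← Complex.ofReal_pow,
    Real.sq_sqrt (eigenvalues_conjTranspose_mul_self_nonneg X i)]

lemma conjTranspose_mul_self_mul_rightSingularVectors :
    (X * rightSingularVectors X)ᴴ * (X * rightSingularVectors X) =
      diagonal (singularValues X ^ 2) := by
  have h := (isHermitian_conjTranspose_mul_self X).conjStarAlgAut_star_eigenvectorUnitary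
  rw [Unitary.conjStarAlgAut_star_apply] at h
  rw [conjTranspose_mul, Matrix.mul_assoc, ← Matrix.mul_assoc Xᴴ, ← Matrix.mul_assoc,
    rightSingularVectors, ← star_eq_conjTranspose, h]
  congr 1
  funext i
  exact (singularValues_sq X i).symm

lemma conjTranspose_leftSingularVectors_mul_self :
    (leftSingularVectors X)ᴴ * leftSingularVectors X =
      diagonal (singularSupport X) := by
  rw [leftSingularVectors, conjTranspose_mul, Matrix.mul_assoc, ← Matrix.mul_assoc _ (X * _),
    conjTranspose_mul_self_mul_rightSingularVectors, diagonal_conjTranspose,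
    diagonal_mul_diagonal, diagonal_mul_diagonal]
  congr 1
  funext i
  simp only [Pi.star_apply, Pi.inv_apply, Pi.pow_apply, star_inv₀, star_singularValues,
    singularSupport]
  split_ifs with h
  · field_simp
  · simp_all

lemma leftSingularVectors_mul_diagonal :
    leftSingularVectors X * diagonal (singularSupport X) =
      leftSingularVectors X := by
  rw [leftSingularVectors, Matrix.mul_assoc _ (diagonal _), diagonal_mul_diagonal]
  congr 2
  funext i
  simp only [Pi.inv_apply, singularSupport]
  split_ifs with h <;> simp_all

lemma leftSingularVectors_mul_conjTranspose_mul_self :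
    leftSingularVectors X * (leftSingularVectors X)ᴴ * leftSingularVectors X =
      leftSingularVectors X := by
  rw [Matrix.mul_assoc, conjTranspose_leftSingularVectors_mul_self,
    leftSingularVectors_mul_diagonal]

lemma mul_rightSingularVectors_mul_diagonal :
    X * rightSingularVectors X * diagonal (singularSupport X) =
      X * rightSingularVectors X := by
  set W := X * rightSingularVectors X
  have hker : W * diagonal (1 - singularSupport X) = 0 := by
    rw [← conjTranspose_mul_self_eq_zero, conjTranspose_mul, Matrix.mul_assoc,
      ← Matrix.mul_assoc Wᴴ, conjTranspose_mul_self_mul_rightSingularVectors,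
      diagonal_conjTranspose, diagonal_mul_diagonal, diagonal_mul_diagonal, ← diagonal_zero]
    congr 1
    funext i
    simp only [Pi.star_apply, Pi.sub_apply, Pi.one_apply, Pi.pow_apply, singularSupport]
    split_ifs <;> simp_all
  calc W * diagonal (singularSupport X)
      = W * diagonal (singularSupport X) + W * diagonal (1 - singularSupport X) := by
        rw [hker, add_zero]
    _ = W := by
        rw [← Matrix.mul_add, diagonal_add]
        simp

lemma leftSingularVectors_mul_diagonal_mul_conjTranspose :
    leftSingularVectors X * diagonal (singularValues X) * (rightSingularVectors X)ᴴ = X := by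
  have hinv : (fun i => (singularValues X)⁻¹ i * singularValues X i) = singularSupport X := by
    funext i
    simp only [Pi.inv_apply, singularSupport]
    split_ifs with h <;> simp_all
  rw [leftSingularVectors, Matrix.mul_assoc (X * rightSingularVectors X), diagonal_mul_diagonal',
    hinv, mul_rightSingularVectors_mul_diagonal, Matrix.mul_assoc,
    rightSingularVectors_mul_conjTranspose, Matrix.mul_one]

lemma conjTranspose_leftSingularVectors_mul_mul :
    (leftSingularVectors X)ᴴ * X * rightSingularVectors X = diagonal (singularValues X) := by
  calc (leftSingularVectors X)ᴴ * X * rightSingularVectors X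
      = (leftSingularVectors X)ᴴ * (leftSingularVectors X * diagonal (singularValues X) *
          (rightSingularVectors X)ᴴ) * rightSingularVectors X := by
        rw [leftSingularVectors_mul_diagonal_mul_conjTranspose]
    _ = diagonal (singularValues X) := by
        rw [Matrix.mul_assoc, Matrix.mul_assoc, conjTranspose_rightSingularVectors_mul,
          Matrix.mul_one, ← Matrix.mul_assoc, conjTranspose_leftSingularVectors_mul_self,
          diagonal_mul_diagonal]
        congr 1
        funext i
        simp only [singularSupport]
        split_ifs <;> simp_all

lemma nuclearNorm_eq_re_trace : nuclearNorm X = (diagonal (singularValues X)).trace.re := by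
  simp [nuclearNorm, trace_diagonal, singularValues]

lemma card_singularValues_ne_zero : Fintype.card {i // singularValues X i ≠ 0} = X.rank := by
  rw [← rank_conjTranspose_mul_self,
    (isHermitian_conjTranspose_mul_self X).rank_eq_card_non_zero_eigs]
  refine Fintype.card_congr (Equiv.subtypeEquivRight fun i => ?_)
  rw [singularValues, ne_eq, Complex.ofReal_eq_zero, Real.sqrt_eq_zero
    (eigenvalues_conjTranspose_mul_self_nonneg X i)]

end SingularValueDecomposition

lemma nuclearNorm_le_of_eq_mul_conjTranspose {m n r : ℕ} {X : Matrix (Fin m) (Fin n) ℂ}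
    {L : Matrix (Fin m) (Fin r) ℂ} {R : Matrix (Fin n) (Fin r) ℂ} (hX : X = L * Rᴴ) :
    nuclearNorm X ≤ (frobNorm L ^ 2 + frobNorm R ^ 2) / 2 := by
  set V := leftSingularVectors X
  set U := rightSingularVectors X
  have hU : U * Uᴴ * U = U := by rw [rightSingularVectors_mul_conjTranspose, Matrix.one_mul]
  have hV : V * Vᴴ * V = V := leftSingularVectors_mul_conjTranspose_mul_self X
  calc nuclearNorm X = (Vᴴ * X * U).trace.re := by
        rw [nuclearNorm_eq_re_trace, conjTranspose_leftSingularVectors_mul_mul]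
    _ = ((Lᴴ * V)ᴴ * (Rᴴ * U)).trace.re := by
        rw [hX, conjTranspose_mul, conjTranspose_conjTranspose]
        simp only [Matrix.mul_assoc]
    _ ≤ (frobNorm (Lᴴ * V) ^ 2 + frobNorm (Rᴴ * U) ^ 2) / 2 :=
        re_trace_conjTranspose_mul_le _ _
    _ ≤ (frobNorm L ^ 2 + frobNorm R ^ 2) / 2 := by
        gcongr
        exacts [frobNorm_nonneg _, frobNorm_conjTranspose_mul_le hV L, frobNorm_nonneg _,
          frobNorm_conjTranspose_mul_le hU R]

lemma exists_eq_mul_conjTranspose_frobNorm_sq_eq_nuclearNorm {m n r : ℕ}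
    (X : Matrix (Fin m) (Fin n) ℂ) (hr : X.rank ≤ r) :
    ∃ (L : Matrix (Fin m) (Fin r) ℂ) (R : Matrix (Fin n) (Fin r) ℂ),
      X = L * Rᴴ ∧ frobNorm L ^ 2 = nuclearNorm X ∧ frobNorm R ^ 2 = nuclearNorm X := by
  obtain ⟨Q, hQ⟩ :
      ∃ Q : Matrix (Fin n) (Fin r) ℂ, Q * Qᴴ = diagonal (singularSupport X) :=
    exists_mul_conjTranspose_eq_diagonal _ ((card_singularValues_ne_zero X).trans_le hr)
  set σ := singularValues X
  set e := singularSupport X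
  set τ : Fin n → ℂ :=
    fun i => ((√(√((isHermitian_conjTranspose_mul_self X).eigenvalues i)) : ℝ) : ℂ)
  have hτ (i : Fin n) : star (τ i) * τ i = σ i := by
    simp only [τ, σ, singularValues, Complex.star_def, Complex.conj_ofReal,
      ← Complex.ofReal_mul, Real.mul_self_sqrt (Real.sqrt_nonneg _)]
  have hσ (i : Fin n) : σ i * e i = σ i := by
    simp only [σ, e, singularSupport]
    split_ifs <;> simp_all
  refine ⟨leftSingularVectors X * diagonal τ * Q, rightSingularVectors X * diagonal τ * Q,
    ?_, ?_, ?_⟩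
  · calc X = leftSingularVectors X * diagonal σ * (rightSingularVectors X)ᴴ :=
          (leftSingularVectors_mul_diagonal_mul_conjTranspose X).symm
      _ = leftSingularVectors X * (diagonal τ * (Q * Qᴴ) * (diagonal τ)ᴴ) *
          (rightSingularVectors X)ᴴ := by
        rw [hQ, diagonal_conjTranspose, diagonal_mul_diagonal, diagonal_mul_diagonal]
        congr 3
        funext i
        simp only [Pi.star_apply]
        linear_combination (-e i) * hτ i - hσ i
      _ = _ := by simp only [conjTranspose_mul, Matrix.mul_assoc]
  · rw [frobNorm_sq_mul_mul, conjTranspose_leftSingularVectors_mul_self, hQ,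
      diagonal_conjTranspose, diagonal_mul_diagonal, diagonal_mul_diagonal, diagonal_mul_diagonal,
      nuclearNorm_eq_re_trace]
    congr 3
    funext i
    simp only [Pi.star_apply]
    linear_combination e i ^ 2 * hτ i + (e i + 1) * hσ i
  · rw [frobNorm_sq_mul_mul, conjTranspose_rightSingularVectors_mul, Matrix.mul_one, hQ,
      diagonal_conjTranspose, diagonal_mul_diagonal, diagonal_mul_diagonal,
      nuclearNorm_eq_re_trace]
    congr 3
    funext i
    simp only [Pi.star_apply]
    linear_combination e i * hτ i + hσ i

theorem nuclearNorm_eq_min_factorization {m n r : ℕ}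
    (X : Matrix (Fin m) (Fin n) ℂ) (hr : X.rank ≤ r) :
    IsLeast {c : ℝ | ∃ (L : Matrix (Fin m) (Fin r) ℂ) (R : Matrix (Fin n) (Fin r) ℂ),
        X = L * Rᴴ ∧ c = (frobNorm L ^ 2 + frobNorm R ^ 2) / 2}
      (nuclearNorm X) := by
  obtain ⟨L, R, hX, hL, hR⟩ := exists_eq_mul_conjTranspose_frobNorm_sq_eq_nuclearNorm X hr
  refine ⟨⟨L, R, hX, by rw [hL, hR]; ring⟩, ?_⟩
  rintro c ⟨L, R, hX, rfl⟩
  exact nuclearNorm_le_of_eq_mul_conjTranspose hX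
end

section
/- Let Q = w₁·U·Uᴴ + U⊥·U⊥ᴴ and W = w₂·V·Vᴴ + V⊥·V⊥ᴴ with 0 < w₁, w₂ ≤ 1. Then for any X ∈ ℂ^{m×n}, w₁·w₂·‖X‖_* ≤ ‖Q·X·W‖_* ≤ ‖X‖_*. -/
open Matrix
open scoped ComplexOrder

/-!
`Q` and `W` are `w • p + (1 - p)` for the orthogonal projections `p = U Uᴴ`, `p = V Vᴴ`: their
operator norms are at most `1`, and their inverses `w⁻¹ • p + (1 - p)` have norm at most `w⁻¹`.
Both bounds then follow from `‖A X B‖_* ≤ ‖A‖ ‖B‖ ‖X‖_*`, a consequence of the duality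
`‖Y‖_* = max_{‖Z‖ ≤ 1} Re tr (Zᴴ Y)`: the bound `Re tr (Zᴴ Y) ≤ ‖Z‖ ‖Y‖_*` is read off in an
eigenbasis of `Yᴴ Y`, and equality holds at the polar factor of `Y`.
-/

open scoped InnerProductSpace Matrix.Norms.L2Operator MatrixOrder

section Idempotent

variable {R A : Type*} [CommRing R] [Ring A] [Algebra R A] {p : A}

lemma IsIdempotentElem.smul_add_one_sub_mul (hp : IsIdempotentElem p) (a b : R) :
    (a • p + (1 - p)) * (b • p + (1 - p)) = (a * b) • p + (1 - p) := by
  have h₁ : p * (1 - p) = 0 := by rw [mul_sub, mul_one, hp.eq, sub_self]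
  have h₂ : (1 - p) * p = 0 := by rw [sub_mul, one_mul, hp.eq, sub_self]
  simp only [add_mul, mul_add, smul_mul_assoc, mul_smul_comm, hp.eq, h₁, h₂, hp.one_sub.eq,
    smul_zero, add_zero, zero_add, smul_smul, mul_comm b]

lemma IsIdempotentElem.smul_add_one_sub_mul_eq_one (hp : IsIdempotentElem p) {a b : R}
    (hab : a * b = 1) : (a • p + (1 - p)) * (b • p + (1 - p)) = 1 := by
  rw [hp.smul_add_one_sub_mul, hab, one_smul, add_sub_cancel]

end Idempotent

lemma IsStarProjection.norm_smul_add_one_sub_le {A : Type*} [CStarAlgebra A] [PartialOrder A]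
    [StarOrderedRing A] {p : A} (hp : IsStarProjection p) {a : ℂ} {c : ℝ} (ha : ‖a‖ ≤ c)
    (hc : 1 ≤ c) : ‖a • p + (1 - p)‖ ≤ c := by
  have hstar : star (a • p + (1 - p)) * (a • p + (1 - p)) = (‖a‖ ^ 2 : ℝ) • p + (1 - p) := by
    rw [star_add, star_smul, star_sub, star_one, hp.isSelfAdjoint.star_eq,
      hp.isIdempotentElem.smul_add_one_sub_mul, RCLike.star_def, RCLike.conj_mul]
    simp [← Complex.coe_smul]
  have hle : star (a • p + (1 - p)) * (a • p + (1 - p)) ≤ algebraMap ℝ A (c ^ 2) := by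
    have hdiff : algebraMap ℝ A (c ^ 2) - ((‖a‖ ^ 2 : ℝ) • p + (1 - p)) =
        (c ^ 2 - ‖a‖ ^ 2) • p + (c ^ 2 - 1) • (1 - p) := by
      rw [Algebra.algebraMap_eq_smul_one]
      module
    rw [hstar, ← sub_nonneg, hdiff]
    exact add_nonneg (smul_nonneg (by nlinarith [norm_nonneg a]) hp.nonneg)
      (smul_nonneg (by nlinarith) hp.one_sub_nonneg)
  have hsq := (CStarAlgebra.norm_le_iff_le_algebraMap _ (sq_nonneg c)
    (star_mul_self_nonneg _)).2 hle
  rw [CStarRing.norm_star_mul_self, ← sq] at hsq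
  exact (pow_le_pow_iff_left₀ (norm_nonneg _) (by linarith) two_ne_zero).1 hsq

namespace Matrix

variable {𝕜 : Type*} [RCLike 𝕜] {m n ι : Type*} [Fintype m] [Fintype n] [Fintype ι]

lemma isStarProjection_mul_conjTranspose_self [DecidableEq ι] {U : Matrix m ι 𝕜}
    (hU : Uᴴ * U = 1) : IsStarProjection (U * Uᴴ) where
  isIdempotentElem := by rw [IsIdempotentElem, Matrix.mul_assoc, ← Matrix.mul_assoc Uᴴ, hU,
    Matrix.one_mul]
  isSelfAdjoint := isHermitian_mul_conjTranspose_self U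

variable [DecidableEq n]

lemma IsHermitian.toEuclideanLin_eigenvectorBasis {A : Matrix n n 𝕜} (hA : A.IsHermitian)
    (i : n) :
    toEuclideanLin A (hA.eigenvectorBasis i) = hA.eigenvalues i • hA.eigenvectorBasis i := by
  rw [toLpLin_apply]
  ext1
  rw [hA.mulVec_eigenvectorBasis]
  rfl

lemma IsHermitian.trace_cfc {A : Matrix n n 𝕜} (hA : A.IsHermitian) (f : ℝ → ℝ) :
    (cfc f A).trace = ∑ i, (f (hA.eigenvalues i) : 𝕜) := by
  rw [hA.cfc_eq, IsHermitian.cfc, Unitary.conjStarAlgAut_apply, trace_mul_cycle,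
    Unitary.coe_star_mul_self, Matrix.one_mul, trace_diagonal]
  rfl

lemma trace_eq_sum_inner_toEuclideanLin (M : Matrix n n 𝕜)
    (b : OrthonormalBasis ι 𝕜 (EuclideanSpace 𝕜 n)) :
    M.trace = ∑ i, ⟪b i, toEuclideanLin M (b i)⟫_𝕜 := by
  rw [← LinearMap.trace_eq_sum_inner, toEuclideanLin_eq_toLin_orthonormal,
    LinearMap.trace_eq_matrix_trace 𝕜 (EuclideanSpace.basisFun n 𝕜).toBasis,
    LinearMap.toMatrix_toLin]

variable [DecidableEq m]

lemma inner_toEuclideanLin_conjTranspose_mul (A B : Matrix m n 𝕜) (x : EuclideanSpace 𝕜 n) :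
    ⟪x, toEuclideanLin (Aᴴ * B) x⟫_𝕜 = ⟪toEuclideanLin A x, toEuclideanLin B x⟫_𝕜 := by
  rw [toLpLin_mul_same, toEuclideanLin_conjTranspose_eq_adjoint, LinearMap.comp_apply,
    LinearMap.adjoint_inner_right]

lemma trace_conjTranspose_mul_eq_sum_inner (A B : Matrix m n 𝕜)
    (b : OrthonormalBasis ι 𝕜 (EuclideanSpace 𝕜 n)) :
    (Aᴴ * B).trace = ∑ i, ⟪toEuclideanLin A (b i), toEuclideanLin B (b i)⟫_𝕜 := by
  simp only [trace_eq_sum_inner_toEuclideanLin _ b, inner_toEuclideanLin_conjTranspose_mul]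

lemma norm_toEuclideanLin_eigenvectorBasis (Y : Matrix m n 𝕜) (i : n) :
    ‖toEuclideanLin Y ((isHermitian_conjTranspose_mul_self Y).eigenvectorBasis i)‖ =
      √((isHermitian_conjTranspose_mul_self Y).eigenvalues i) := by
  set hH := isHermitian_conjTranspose_mul_self Y
  rw [← Real.sqrt_sq (norm_nonneg _), ← @inner_self_eq_norm_sq 𝕜,
    ← inner_toEuclideanLin_conjTranspose_mul, hH.toEuclideanLin_eigenvectorBasis,
    RCLike.real_smul_eq_coe_smul (K := 𝕜), inner_smul_right, inner_self_eq_norm_sq_to_K,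
    hH.eigenvectorBasis.orthonormal.1 i]
  simp

end Matrix

section NuclearNorm

variable {k l m n : ℕ}

lemma nuclearNorm_nonneg (X : Matrix (Fin m) (Fin n) ℂ) : 0 ≤ nuclearNorm X :=
  Finset.sum_nonneg fun _ _ => Real.sqrt_nonneg _

lemma re_trace_conjTranspose_mul_le_s8 (Z Y : Matrix (Fin m) (Fin n) ℂ) :
    (Zᴴ * Y).trace.re ≤ ‖Z‖ * nuclearNorm Y := by
  set b := (isHermitian_conjTranspose_mul_self Y).eigenvectorBasis
  rw [trace_conjTranspose_mul_eq_sum_inner Z Y b, Complex.re_sum, nuclearNorm, Finset.mul_sum]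
  gcongr with i
  calc _ ≤ ‖toEuclideanLin Z (b i)‖ * ‖toEuclideanLin Y (b i)‖ :=
        (Complex.re_le_norm _).trans (norm_inner_le_norm _ _)
    _ ≤ ‖Z‖ * ‖toEuclideanLin Y (b i)‖ := by
        gcongr
        simpa [b.orthonormal.1 i, toLpLin_apply] using Z.l2_opNorm_mulVec (b i)
    _ = _ := by rw [norm_toEuclideanLin_eigenvectorBasis]

/-- The witness is the polar factor `Y (Yᴴ Y)^{-1/2}`; since `0⁻¹ = 0`, it is a partial isometry
even when `Y` is singular. -/
lemma exists_norm_le_one_re_trace_eq_nuclearNorm (Y : Matrix (Fin m) (Fin n) ℂ) :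
    ∃ Z : Matrix (Fin m) (Fin n) ℂ, ‖Z‖ ≤ 1 ∧ (Zᴴ * Y).trace.re = nuclearNorm Y := by
  have hH := isHermitian_conjTranspose_mul_self Y
  have hcont (f : ℝ → ℝ) : ContinuousOn f (spectrum ℝ (Yᴴ * Y)) :=
    finite_real_spectrum.continuousOn f
  set S := cfc (fun t => (√t)⁻¹) (Yᴴ * Y)
  have hS : Sᴴ = S := (cfc_predicate _ (Yᴴ * Y) : IsSelfAdjoint S).star_eq
  refine ⟨Y * S, ?_, ?_⟩
  · have hZZ : (Y * S)ᴴ * (Y * S) = cfc (fun t => (√t)⁻¹ * t * (√t)⁻¹) (Yᴴ * Y) := by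
      rw [cfc_mul _ _ _ (hcont _) (hcont _), cfc_mul _ _ _ (hcont _) (hcont _),
        cfc_id' ℝ (Yᴴ * Y), conjTranspose_mul, hS]
      simp only [Matrix.mul_assoc]
      rfl
    have h : ‖(Y * S)ᴴ * (Y * S)‖ ≤ 1 := by
      rw [hZZ]
      refine norm_cfc_le zero_le_one fun t _ => ?_
      rw [← div_eq_inv_mul, Real.div_sqrt, Real.norm_of_nonneg (by positivity)]
      exact mul_inv_le_one
    rw [l2_opNorm_conjTranspose_mul_self] at h
    nlinarith [norm_nonneg (Y * S)]
  · have hSH : S * (Yᴴ * Y) = cfc Real.sqrt (Yᴴ * Y) := by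
      conv_lhs => rw [← cfc_id' ℝ (Yᴴ * Y)]
      rw [← cfc_mul _ _ _ (hcont _) (hcont _)]
      simp only [← div_eq_inv_mul, Real.div_sqrt]
    rw [conjTranspose_mul, hS, Matrix.mul_assoc, hSH, hH.trace_cfc, Complex.re_sum]
    rfl

lemma nuclearNorm_mul_mul_le (A : Matrix (Fin k) (Fin m) ℂ) (B : Matrix (Fin n) (Fin l) ℂ)
    (X : Matrix (Fin m) (Fin n) ℂ) :
    nuclearNorm (A * X * B) ≤ ‖A‖ * ‖B‖ * nuclearNorm X := by
  obtain ⟨Z, hZ, hZX⟩ := exists_norm_le_one_re_trace_eq_nuclearNorm (A * X * B)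
  have htrace : (Zᴴ * (A * X * B)).trace = ((Aᴴ * Z * Bᴴ)ᴴ * X).trace := by
    simp only [conjTranspose_mul, conjTranspose_conjTranspose, Matrix.mul_assoc]
    rw [trace_mul_comm B]
    simp only [Matrix.mul_assoc]
  have hnorm : ‖Aᴴ * Z * Bᴴ‖ ≤ ‖A‖ * ‖B‖ :=
    calc ‖Aᴴ * Z * Bᴴ‖ ≤ ‖Aᴴ‖ * ‖Z‖ * ‖Bᴴ‖ :=
          (l2_opNorm_mul _ _).trans (by gcongr; exact l2_opNorm_mul _ _)
      _ ≤ ‖A‖ * 1 * ‖B‖ := by rw [l2_opNorm_conjTranspose, l2_opNorm_conjTranspose]; gcongr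
      _ = ‖A‖ * ‖B‖ := by ring
  calc nuclearNorm (A * X * B) = ((Aᴴ * Z * Bᴴ)ᴴ * X).trace.re := by rw [← hZX, htrace]
    _ ≤ ‖Aᴴ * Z * Bᴴ‖ * nuclearNorm X := re_trace_conjTranspose_mul_le_s8 _ X
    _ ≤ ‖A‖ * ‖B‖ * nuclearNorm X := mul_le_mul_of_nonneg_right hnorm (nuclearNorm_nonneg X)

lemma nuclearNorm_le_of_mul_eq_one {A A' : Matrix (Fin m) (Fin m) ℂ}
    {B B' : Matrix (Fin n) (Fin n) ℂ} (hA : A' * A = 1) (hB : B * B' = 1)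
    (X : Matrix (Fin m) (Fin n) ℂ) :
    nuclearNorm X ≤ ‖A'‖ * ‖B'‖ * nuclearNorm (A * X * B) := by
  have hX : X = A' * (A * X * B) * B' := by
    simp only [← Matrix.mul_assoc, hA, Matrix.one_mul]
    rw [Matrix.mul_assoc, hB, Matrix.mul_one]
  conv_lhs => rw [hX]
  exact nuclearNorm_mul_mul_le A' B' _

end NuclearNorm

theorem weighted_nuclearNorm_bounds_general {m n r₁ r₂ : ℕ}
    (w₁ w₂ : ℝ) (hw₁0 : 0 < w₁) (hw₁1 : w₁ ≤ 1) (hw₂0 : 0 < w₂) (hw₂1 : w₂ ≤ 1)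
    (U : Matrix (Fin m) (Fin r₁) ℂ) (Up : Matrix (Fin m) (Fin (m - r₁)) ℂ)
    (V : Matrix (Fin n) (Fin r₂) ℂ) (Vp : Matrix (Fin n) (Fin (n - r₂)) ℂ)
    (hU : Uᴴ * U = 1)
    (hUcomp : U * Uᴴ + Up * Upᴴ = 1)
    (hV : Vᴴ * V = 1)
    (hVcomp : V * Vᴴ + Vp * Vpᴴ = 1)
    (Q : Matrix (Fin m) (Fin m) ℂ) (hQdef : Q = (w₁ : ℂ) • (U * Uᴴ) + Up * Upᴴ)
    (W : Matrix (Fin n) (Fin n) ℂ) (hWdef : W = (w₂ : ℂ) • (V * Vᴴ) + Vp * Vpᴴ)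
    (X : Matrix (Fin m) (Fin n) ℂ) :
    w₁ * w₂ * nuclearNorm X ≤ nuclearNorm (Q * X * W) ∧
    nuclearNorm (Q * X * W) ≤ nuclearNorm X := by
  have hP := isStarProjection_mul_conjTranspose_self hU
  have hR := isStarProjection_mul_conjTranspose_self hV
  rw [eq_sub_of_add_eq' hUcomp] at hQdef
  rw [eq_sub_of_add_eq' hVcomp] at hWdef
  have hw₁ : (w₁ : ℂ) ≠ 0 := Complex.ofReal_ne_zero.2 hw₁0.ne'
  have hw₂ : (w₂ : ℂ) ≠ 0 := Complex.ofReal_ne_zero.2 hw₂0.ne'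
  have hQ : ‖Q‖ ≤ 1 := hQdef ▸ hP.norm_smul_add_one_sub_le (by simpa [abs_of_pos hw₁0]) le_rfl
  have hW : ‖W‖ ≤ 1 := hWdef ▸ hR.norm_smul_add_one_sub_le (by simpa [abs_of_pos hw₂0]) le_rfl
  have hQ'Q := hQdef ▸ hP.isIdempotentElem.smul_add_one_sub_mul_eq_one (inv_mul_cancel₀ hw₁)
  have hWW' := hWdef ▸ hR.isIdempotentElem.smul_add_one_sub_mul_eq_one (mul_inv_cancel₀ hw₂)
  have hQ' := hP.norm_smul_add_one_sub_le (a := (w₁ : ℂ)⁻¹) (by simp [abs_of_pos hw₁0])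
    (one_le_inv₀ hw₁0 |>.2 hw₁1)
  have hW' := hR.norm_smul_add_one_sub_le (a := (w₂ : ℂ)⁻¹) (by simp [abs_of_pos hw₂0])
    (one_le_inv₀ hw₂0 |>.2 hw₂1)
  have hX := nuclearNorm_nonneg X
  have hY := nuclearNorm_nonneg (Q * X * W)
  constructor
  · calc w₁ * w₂ * nuclearNorm X
        ≤ w₁ * w₂ * (w₁⁻¹ * w₂⁻¹ * nuclearNorm (Q * X * W)) := by
          gcongr
          exact (nuclearNorm_le_of_mul_eq_one hQ'Q hWW' X).trans (by gcongr)
      _ = nuclearNorm (Q * X * W) := by field_simp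
  · calc nuclearNorm (Q * X * W) ≤ ‖Q‖ * ‖W‖ * nuclearNorm X := nuclearNorm_mul_mul_le Q W X
      _ ≤ 1 * 1 * nuclearNorm X := by gcongr
      _ = nuclearNorm X := by ring

theorem weighted_nuclearNorm_bounds {m n r₁ r₂ : ℕ}
    (w₁ w₂ : ℝ) (hw₁0 : 0 < w₁) (hw₁1 : w₁ ≤ 1) (hw₂0 : 0 < w₂) (hw₂1 : w₂ ≤ 1)
    (U : Matrix (Fin m) (Fin r₁) ℂ) (Up : Matrix (Fin m) (Fin (m - r₁)) ℂ)
    (V : Matrix (Fin n) (Fin r₂) ℂ) (Vp : Matrix (Fin n) (Fin (n - r₂)) ℂ)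
    (hU : Uᴴ * U = 1) (hUp : Upᴴ * Up = 1) (hUUp : Uᴴ * Up = 0)
    (hUcomp : U * Uᴴ + Up * Upᴴ = 1)
    (hV : Vᴴ * V = 1) (hVp : Vpᴴ * Vp = 1) (hVVp : Vᴴ * Vp = 0)
    (hVcomp : V * Vᴴ + Vp * Vpᴴ = 1)
    (Q : Matrix (Fin m) (Fin m) ℂ) (hQdef : Q = (w₁ : ℂ) • (U * Uᴴ) + Up * Upᴴ)
    (W : Matrix (Fin n) (Fin n) ℂ) (hWdef : W = (w₂ : ℂ) • (V * Vᴴ) + Vp * Vpᴴ)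
    (X : Matrix (Fin m) (Fin n) ℂ) :
    w₁ * w₂ * nuclearNorm X ≤ nuclearNorm (Q * X * W) ∧
    nuclearNorm (Q * X * W) ≤ nuclearNorm X :=
  weighted_nuclearNorm_bounds_general w₁ w₂ hw₁0 hw₁1 hw₂0 hw₂1 U Up V Vp hU hUcomp hV hVcomp Q
    hQdef W hWdef X
end
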